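/- The variance of the general MFMC estimator (with target level t = 0) equals \sigma_0^2/n^0 + \sum_{i=1}^q (1/n^{i-1} - 1/n^i)( (c^i)^2 \sigma_i^2 - 2 c^i \sigma_{0,i} ), under a nested coupling of samples across fidelity levels where the first n^{i-1} samples used at level i coincide (in joint distribution with level 0) and the remaining are independent extensions. -/

import Mathlib

/-!
The estimator is the level-0 sample mean plus one correction per level, a multiple of the
difference of two sample means of the same samples. For samples uncorrelated across indices,
the covariance of a mean of `m` and a mean of `p` samples only sees the `min m p` shared
indices, so it equals `min m p * s / (m * p)` when `s` is the covariance at each shared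
index. Corrections of different levels are therefore uncorrelated, and the variance is that
of the level-0 mean plus, for each level `i`, the variance
`c i ^ 2 * σsq i * (1 / n (i - 1) - 1 / n i)` of the correction and twice its covariance
`c i * σ0i i * (1 / n i - 1 / n (i - 1))` with the level-0 mean; the latter only
involves the first `n 0 ≤ n (i - 1) ≤ n i` indices.
-/

open MeasureTheory ProbabilityTheory

noncomputable def covar {Ω : Type*} [MeasurableSpace Ω] (μ : Measure Ω) (X Y : Ω → ℝ) : ℝ :=
  ∫ ω, (X ω - ∫ x, X x ∂μ) * (Y ω - ∫ x, Y x ∂μ) ∂μ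

open Finset

section

variable {Ω : Type*} [MeasurableSpace Ω] {μ : Measure Ω}

theorem covar_eq_covariance (X Y : Ω → ℝ) : covar μ X Y = cov[X, Y; μ] := rfl

noncomputable def sampleMean (X : ℕ → Ω → ℝ) (m : ℕ) (ω : Ω) : ℝ :=
  (m : ℝ)⁻¹ * ∑ j ∈ range m, X j ω

variable {X Y : ℕ → Ω → ℝ}

theorem memLp_sampleMean (hX : ∀ j, MemLp (X j) 2 μ) (m : ℕ) :
    MemLp (sampleMean X m) 2 μ :=
  (memLp_finsetSum _ fun j _ => hX j).const_mul _

variable [IsFiniteMeasure μ]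

theorem covariance_sum_range_sum_range (hX : ∀ j, MemLp (X j) 2 μ) (hY : ∀ j, MemLp (Y j) 2 μ)
    (hXY : ∀ j l, j ≠ l → cov[X j, Y l; μ] = 0) (m p : ℕ) :
    cov[fun ω => ∑ j ∈ range m, X j ω, fun ω => ∑ l ∈ range p, Y l ω; μ]
      = ∑ j ∈ range (min m p), cov[X j, Y j; μ] := by
  rw [covariance_fun_sum_fun_sum' (fun j _ => hX j) (fun l _ => hY l), ← range_inter_range,
    ← sum_ite_mem]
  refine sum_congr rfl fun j _ => ?_
  split_ifs with hj
  · exact sum_eq_single_of_mem j hj fun l _ hlj => hXY j l hlj.symm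
  · exact sum_eq_zero fun l hl => hXY j l (ne_of_mem_of_not_mem hl hj).symm

theorem covariance_sampleMean_sampleMean (hX : ∀ j, MemLp (X j) 2 μ) (hY : ∀ j, MemLp (Y j) 2 μ)
    (hXY : ∀ j l, j ≠ l → cov[X j, Y l; μ] = 0) {m p : ℕ} {s : ℝ}
    (hs : ∀ j < min m p, cov[X j, Y j; μ] = s) :
    cov[sampleMean X m, sampleMean Y p; μ] = min m p * s / (m * p) := by
  unfold sampleMean
  rw [covariance_const_mul_left, covariance_const_mul_right,
    covariance_sum_range_sum_range hX hY hXY, sum_congr rfl fun j hj => hs j (mem_range.1 hj),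
    sum_const, card_range, nsmul_eq_mul]
  field_simp

theorem variance_sampleMean (hX : ∀ j, MemLp (X j) 2 μ)
    (hXX : ∀ j l, j ≠ l → cov[X j, X l; μ] = 0) {s : ℝ} (hs : ∀ j, Var[X j; μ] = s) (m : ℕ) :
    Var[sampleMean X m; μ] = s / m := by
  rw [← covariance_self (memLp_sampleMean hX m).aemeasurable,
    covariance_sampleMean_sampleMean hX hX hXX
      fun j _ => (covariance_self (hX j).aemeasurable).trans (hs j), min_self]
  rcases m.eq_zero_or_pos with rfl | hm
  · simp
  · field_simp

theorem variance_sampleMean_sub_sampleMean (hX : ∀ j, MemLp (X j) 2 μ)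
    (hXX : ∀ j l, j ≠ l → cov[X j, X l; μ] = 0) {s : ℝ} (hs : ∀ j, Var[X j; μ] = s)
    {m p : ℕ} (hm : 0 < m) (hmp : m ≤ p) :
    Var[fun ω => sampleMean X p ω - sampleMean X m ω; μ] = (1 / m - 1 / p) * s := by
  have hp : 0 < p := hm.trans_le hmp
  rw [variance_fun_sub (memLp_sampleMean hX p) (memLp_sampleMean hX m),
    variance_sampleMean hX hXX hs, variance_sampleMean hX hXX hs,
    covariance_sampleMean_sampleMean hX hX hXX
      fun j _ => (covariance_self (hX j).aemeasurable).trans (hs j), min_eq_right hmp]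
  field_simp
  ring

theorem covariance_sampleMean_sampleMean_sub (hX : ∀ j, MemLp (X j) 2 μ)
    (hY : ∀ j, MemLp (Y j) 2 μ) (hXY : ∀ j l, j ≠ l → cov[X j, Y l; μ] = 0) {s : ℝ} {k m p : ℕ}
    (hs : ∀ j < k, cov[X j, Y j; μ] = s) (hk : 0 < k) (hkm : k ≤ m) (hkp : k ≤ p) :
    cov[sampleMean X k, fun ω => sampleMean Y p ω - sampleMean Y m ω; μ]
      = (1 / p - 1 / m) * s := by
  have hmean {l : ℕ} (hkl : k ≤ l) : cov[sampleMean X k, sampleMean Y l; μ] = s / l := by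
    rw [covariance_sampleMean_sampleMean hX hY hXY fun j hj => hs j (by omega), min_eq_left hkl]
    field_simp
  rw [covariance_fun_sub_right (memLp_sampleMean hX k) (memLp_sampleMean hY p)
    (memLp_sampleMean hY m), hmean hkp, hmean hkm]
  ring

theorem covariance_sampleMean_sub_sampleMean_sub_of_uncorrelated (hX : ∀ j, MemLp (X j) 2 μ)
    (hY : ∀ j, MemLp (Y j) 2 μ) (hXY : ∀ j l, cov[X j, Y l; μ] = 0) (m p m' p' : ℕ) :
    cov[fun ω => sampleMean X p ω - sampleMean X m ω,
      fun ω => sampleMean Y p' ω - sampleMean Y m' ω; μ] = 0 := by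
  have hmean (k l : ℕ) : cov[sampleMean X k, sampleMean Y l; μ] = 0 := by
    simpa using covariance_sampleMean_sampleMean hX hY (fun j l _ => hXY j l)
      (m := k) (p := l) fun j _ => hXY j j
  rw [covariance_fun_sub_fun_sub (memLp_sampleMean hX p) (memLp_sampleMean hX m)
    (memLp_sampleMean hY p') (memLp_sampleMean hY m'), hmean, hmean, hmean, hmean]
  ring

theorem variance_add_sum_of_uncorrelated {ι : Type*} {Z : Ω → ℝ} {W : ι → Ω → ℝ} {t : Finset ι}
    (hZ : MemLp Z 2 μ) (hW : ∀ i ∈ t, MemLp (W i) 2 μ)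
    (hWW : ∀ i ∈ t, ∀ k ∈ t, i ≠ k → cov[W i, W k; μ] = 0) :
    Var[fun ω => Z ω + ∑ i ∈ t, W i ω; μ]
      = Var[Z; μ] + ∑ i ∈ t, (Var[W i; μ] + 2 * cov[Z, W i; μ]) := by
  rw [variance_fun_add hZ (memLp_finsetSum t hW), covariance_fun_sum_right' hW hZ,
    variance_fun_sum' hW, mul_sum, add_assoc, ← sum_add_distrib]
  congr 1
  refine sum_congr rfl fun i hi => ?_
  rw [add_comm, sum_eq_single_of_mem i hi fun k hk hki => hWW i hi k hk hki.symm,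
    covariance_self (hW i hi).aemeasurable]

end

theorem mfmc_variance_general
    {Ω : Type*} [MeasurableSpace Ω] (μ : Measure Ω) [IsProbabilityMeasure μ]
    (q : ℕ) (n : ℕ → ℕ) (hn : 0 < n 0)
    (hmono : ∀ i, i < q → n i ≤ n (i + 1))
    (F : ℕ → ℕ → Ω → ℝ) (c : ℕ → ℝ) (σsq σ0i : ℕ → ℝ)
    (hL2 : ∀ i j, MemLp (F i j) 2 μ)
    (hvar : ∀ i j, variance (F i j) μ = σsq i)
    (hcov0 : ∀ i, 1 ≤ i → i ≤ q → ∀ j < n 0, covar μ (F 0 j) (F i j) = σ0i i)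
    (hindidx : ∀ i k j l, j ≠ l → covar μ (F i j) (F k l) = 0)
    (hindlvl : ∀ i k, 1 ≤ i → 1 ≤ k → i ≠ k → ∀ j, covar μ (F i j) (F k j) = 0) :
    variance (fun ω =>
        (n 0 : ℝ)⁻¹ * ∑ j ∈ Finset.range (n 0), F 0 j ω
          + ∑ i ∈ Finset.Icc 1 q, c i *
              ((n i : ℝ)⁻¹ * ∑ j ∈ Finset.range (n i), F i j ω
                - (n (i - 1) : ℝ)⁻¹ * ∑ j ∈ Finset.range (n (i - 1)), F i j ω)) μ
      = σsq 0 / n 0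
        + ∑ i ∈ Finset.Icc 1 q,
            (1 / (n (i - 1) : ℝ) - 1 / n i) * ((c i) ^ 2 * σsq i - 2 * c i * σ0i i) := by
  simp only [covar_eq_covariance] at hcov0 hindidx hindlvl
  have hmon : MonotoneOn n (Set.Iic q) := monotoneOn_of_le_succ Set.ordConnected_Iic
    fun i _ _ hi => by rw [Order.succ_eq_add_one] at hi ⊢; exact hmono i (by simpa using hi)
  have hD (i : ℕ) : MemLp (fun ω => c i * (sampleMean (F i) (n i) ω
      - sampleMean (F i) (n (i - 1)) ω)) 2 μ :=
    ((memLp_sampleMean (hL2 i) _).sub (memLp_sampleMean (hL2 i) _)).const_mul _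
  refine (variance_add_sum_of_uncorrelated (memLp_sampleMean (hL2 0) (n 0)) (fun i _ => hD i)
    fun i hi k hk hik => ?_).trans ?_
  · simp only [mem_Icc] at hi hk
    rw [covariance_const_mul_left, covariance_const_mul_right,
      covariance_sampleMean_sub_sampleMean_sub_of_uncorrelated (hL2 i) (hL2 k) (fun j l => ?_),
      mul_zero, mul_zero]
    rcases eq_or_ne j l with rfl | hjl
    · exact hindlvl i k hi.1 hk.1 hik j
    · exact hindidx i k j l hjl
  have hlevel {i : ℕ} (hi : i ∈ Icc 1 q) : n 0 ≤ n (i - 1) ∧ n (i - 1) ≤ n i := by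
    simp only [mem_Icc] at hi
    exact ⟨hmon (Set.mem_Iic.2 (Nat.zero_le q)) (Set.mem_Iic.2 (by omega)) (Nat.zero_le _),
      hmon (Set.mem_Iic.2 (by omega)) (Set.mem_Iic.2 hi.2) (by omega)⟩
  rw [variance_sampleMean (hL2 0) (hindidx 0 0) (hvar 0)]
  congr 1
  refine sum_congr rfl fun i hi => ?_
  obtain ⟨h0, hsucc⟩ := hlevel hi
  rw [variance_const_mul, covariance_const_mul_right,
    variance_sampleMean_sub_sampleMean (hL2 i) (hindidx i i) (hvar i)
      (hn.trans_le h0) hsucc,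
    covariance_sampleMean_sampleMean_sub (hL2 0) (hL2 i) (hindidx 0 i)
      (hcov0 i (mem_Icc.1 hi).1 (mem_Icc.1 hi).2) hn h0 (h0.trans hsucc)]
  ring

/-- variance of the general MFMC estimator (target level 0) under the
nested coupling of samples across fidelity levels. -/
theorem mfmc_variance
    {Ω : Type*} [MeasurableSpace Ω] (μ : Measure Ω) [IsProbabilityMeasure μ]
    (q : ℕ) (hq : 1 ≤ q) (n : ℕ → ℕ) (hn : 0 < n 0)
    (hmono : ∀ i, i < q → n i ≤ n (i + 1))
    (F : ℕ → ℕ → Ω → ℝ) (c : ℕ → ℝ) (σsq σ0i : ℕ → ℝ)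
    (hL2 : ∀ i j, MemLp (F i j) 2 μ)
    (hvar : ∀ i j, variance (F i j) μ = σsq i)
    (hcov0 : ∀ i, 1 ≤ i → i ≤ q → ∀ j < n 0, covar μ (F 0 j) (F i j) = σ0i i)
    (hindidx : ∀ i k j l, j ≠ l → covar μ (F i j) (F k l) = 0)
    (hindlvl : ∀ i k, 1 ≤ i → 1 ≤ k → i ≠ k → ∀ j, covar μ (F i j) (F k j) = 0) :
    variance (fun ω =>
        (n 0 : ℝ)⁻¹ * ∑ j ∈ Finset.range (n 0), F 0 j ω
          + ∑ i ∈ Finset.Icc 1 q, c i *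
              ((n i : ℝ)⁻¹ * ∑ j ∈ Finset.range (n i), F i j ω
                - (n (i - 1) : ℝ)⁻¹ * ∑ j ∈ Finset.range (n (i - 1)), F i j ω)) μ
      = σsq 0 / n 0
        + ∑ i ∈ Finset.Icc 1 q,
            (1 / (n (i - 1) : ℝ) - 1 / n i) * ((c i) ^ 2 * σsq i - 2 * c i * σ0i i) :=
  mfmc_variance_general μ q n hn hmono F c σsq σ0i hL2 hvar hcov0 hindidx hindlvl
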